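/- Let the Cornu spiral γ: ℝ → ℝ² of parameter λ ≠ 0 be given by γ(s) = (∫₀ˢ cos(λt²/2) dt, ∫₀ˢ sin(λt²/2) dt). Then γ is a bounded curve (its image is contained in a bounded subset of ℝ²) of infinite length (it is parametrized by arclength: |γ'(s)| = 1 for all s, and its domain is all of ℝ). -/

import Mathlib

/-!
Away from `t = 0` the integrand is a derivative divided by `t`: `cos (λt²/2) = t⁻¹ · F'(t)` with
`F = λ⁻¹ sin (λt²/2)`, and similarly for `sin`. Integrating by parts against `t⁻¹` on `[1, s]`
bounds the tail by `2 sup |F| = 2/|λ|` uniformly in `s`, since `∫₁^∞ t⁻² = 1`; the piece over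
`[0, 1]` is at most `1`, and evenness of the integrands handles `s < 0`. Unit speed is the
fundamental theorem of calculus together with `cos² + sin² = 1`.
-/

open intervalIntegral Set
open scoped Interval

theorem continuousOn_inv_sq_uIcc_one {s : ℝ} (hs : 1 ≤ s) :
    ContinuousOn (fun t : ℝ => (t ^ 2)⁻¹) [[1, s]] :=
  (continuousOn_pow 2).inv₀ fun t ht => by rw [uIcc_of_le hs] at ht; nlinarith [ht.1]

theorem integral_inv_sq_one {s : ℝ} (hs : 1 ≤ s) : ∫ t in (1:ℝ)..s, (t ^ 2)⁻¹ = 1 - s⁻¹ := by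
  have hderiv : ∀ t ∈ [[1, s]], HasDerivAt (fun t : ℝ => -t⁻¹) (t ^ 2)⁻¹ t := fun t ht => by
    have ht0 : t ≠ 0 := by rw [uIcc_of_le hs] at ht; linarith [ht.1]
    simpa using (hasDerivAt_inv ht0).fun_neg
  rw [integral_eq_sub_of_hasDerivAt hderiv (continuousOn_inv_sq_uIcc_one hs).intervalIntegrable]
  ring

theorem abs_integral_inv_mul_deriv_le {F F' : ℝ → ℝ} {M s : ℝ} (hs : 1 ≤ s)
    (hF : ∀ t ∈ [[1, s]], HasDerivAt F (F' t) t) (hF' : ContinuousOn F' [[1, s]])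
    (hM : ∀ t ∈ [[1, s]], |F t| ≤ M) :
    |∫ t in (1:ℝ)..s, t⁻¹ * F' t| ≤ 2 * M := by
  have hinv : ∀ t ∈ [[1, s]], HasDerivAt (fun t : ℝ => t⁻¹) (-(t ^ 2)⁻¹) t := fun t ht => by
    rw [uIcc_of_le hs] at ht; exact hasDerivAt_inv (by linarith [ht.1])
  rw [integral_mul_deriv_eq_deriv_mul hinv hF
    (continuousOn_inv_sq_uIcc_one hs).neg.intervalIntegrable hF'.intervalIntegrable]
  have hrem : |∫ t in (1:ℝ)..s, -(t ^ 2)⁻¹ * F t| ≤ M * (1 - s⁻¹) := by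
    rw [← integral_inv_sq_one hs, ← integral_const_mul, ← Real.norm_eq_abs]
    refine norm_integral_le_of_norm_le (μ := MeasureTheory.volume) hs
      (Filter.Eventually.of_forall fun t ht => ?_)
      ((continuousOn_inv_sq_uIcc_one hs).const_smul M).intervalIntegrable
    rw [norm_mul, norm_neg, norm_inv, norm_pow, Real.norm_eq_abs, sq_abs, mul_comm]
    exact mul_le_mul_of_nonneg_right (hM t (Ioc_subset_Icc_self.trans Icc_subset_uIcc ht))
      (by positivity)
  have hFs : |s⁻¹ * F s| ≤ M * s⁻¹ := by
    rw [abs_mul, abs_inv, abs_of_pos (by linarith), mul_comm]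
    exact mul_le_mul_of_nonneg_right (hM s right_mem_uIcc) (by positivity)
  have hF1 : |1⁻¹ * F 1| ≤ M := by simpa using hM 1 left_mem_uIcc
  calc _ ≤ |s⁻¹ * F s - 1⁻¹ * F 1| + |∫ t in (1:ℝ)..s, -(t ^ 2)⁻¹ * F t| :=
        abs_sub _ _
    _ ≤ |s⁻¹ * F s| + |1⁻¹ * F 1| + |∫ t in (1:ℝ)..s, -(t ^ 2)⁻¹ * F t| := by
        gcongr; exact abs_sub _ _
    _ ≤ M * s⁻¹ + M + M * (1 - s⁻¹) := by gcongr
    _ = 2 * M := by ring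

theorem Function.Even.integral_zero_neg {f : ℝ → ℝ} (hf : Function.Even f) (s : ℝ) :
    ∫ t in (0:ℝ)..-s, f t = -∫ t in (0:ℝ)..s, f t := by
  rw [integral_symm, ← neg_zero, ← integral_comp_neg, neg_zero]
  exact congrArg Neg.neg (integral_congr fun t _ => hf t)

theorem abs_integral_zero_le_of_hasDerivAt_mul {f F : ℝ → ℝ} {M s : ℝ} (hf : Continuous f)
    (hf1 : ∀ t, |f t| ≤ 1) (hF : ∀ t, HasDerivAt F (t * f t) t) (hFM : ∀ t, |F t| ≤ M)
    (hs : 0 ≤ s) : |∫ t in (0:ℝ)..s, f t| ≤ 1 + 2 * M := by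
  have hM : 0 ≤ M := (abs_nonneg _).trans (hFM 0)
  have hbound : ∀ b, |∫ t in (0:ℝ)..b, f t| ≤ |b| := fun b => by
    simpa using norm_integral_le_of_norm_le_const (a := 0) (b := b) (f := f) (C := 1)
      fun t _ => hf1 t
  rcases le_or_gt s 1 with hs1 | hs1
  · linarith [hbound s, abs_of_nonneg hs]
  have htail : ∫ t in (1:ℝ)..s, f t = ∫ t in (1:ℝ)..s, t⁻¹ * (t * f t) :=
    integral_congr fun t ht => by
      rw [uIcc_of_le hs1.le] at ht
      rw [inv_mul_cancel_left₀ (by linarith [ht.1])]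
  have hparts : |∫ t in (1:ℝ)..s, f t| ≤ 2 * M := htail ▸
    abs_integral_inv_mul_deriv_le hs1.le (fun t _ => hF t)
      (continuous_id.mul hf).continuousOn fun t _ => hFM t
  rw [← integral_add_adjacent_intervals (hf.intervalIntegrable 0 1) (hf.intervalIntegrable 1 s)]
  calc _ ≤ |∫ t in (0:ℝ)..1, f t| + |∫ t in (1:ℝ)..s, f t| := abs_add_le _ _
    _ ≤ |(1:ℝ)| + 2 * M := add_le_add (hbound 1) hparts
    _ = 1 + 2 * M := by rw [abs_one]

theorem abs_integral_zero_le_of_even_of_hasDerivAt_mul {f F : ℝ → ℝ} {M : ℝ}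
    (heven : Function.Even f) (hf : Continuous f) (hf1 : ∀ t, |f t| ≤ 1)
    (hF : ∀ t, HasDerivAt F (t * f t) t) (hFM : ∀ t, |F t| ≤ M) (s : ℝ) :
    |∫ t in (0:ℝ)..s, f t| ≤ 1 + 2 * M := by
  rcases le_total 0 s with hs | hs
  · exact abs_integral_zero_le_of_hasDerivAt_mul hf hf1 hF hFM hs
  · rw [← neg_neg s, heven.integral_zero_neg, abs_neg]
    exact abs_integral_zero_le_of_hasDerivAt_mul hf hf1 hF hFM (neg_nonneg.2 hs)

theorem hasDerivAt_mul_sq_div_two (lam t : ℝ) :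
    HasDerivAt (fun t : ℝ => lam * t ^ 2 / 2) (lam * t) t :=
  (((hasDerivAt_pow 2 t).const_mul lam).div_const 2).congr_deriv (by ring)

theorem abs_integral_cos_mul_sq_div_two_le {lam : ℝ} (hlam : lam ≠ 0) (s : ℝ) :
    |∫ t in (0:ℝ)..s, Real.cos (lam * t ^ 2 / 2)| ≤ 1 + 2 * |lam|⁻¹ := by
  refine abs_integral_zero_le_of_even_of_hasDerivAt_mul
    (F := fun t => lam⁻¹ * Real.sin (lam * t ^ 2 / 2))
    (fun t => by simp only [neg_sq]) (by fun_prop) (fun t => Real.abs_cos_le_one _)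
    (fun t => ?_) (fun t => ?_) s
  · exact ((hasDerivAt_mul_sq_div_two lam t).sin.const_mul lam⁻¹).congr_deriv (by field_simp)
  · rw [abs_mul, abs_inv]
    exact mul_le_of_le_one_right (by positivity) (Real.abs_sin_le_one _)

theorem abs_integral_sin_mul_sq_div_two_le {lam : ℝ} (hlam : lam ≠ 0) (s : ℝ) :
    |∫ t in (0:ℝ)..s, Real.sin (lam * t ^ 2 / 2)| ≤ 1 + 2 * |lam|⁻¹ := by
  refine abs_integral_zero_le_of_even_of_hasDerivAt_mul
    (F := fun t => -lam⁻¹ * Real.cos (lam * t ^ 2 / 2))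
    (fun t => by simp only [neg_sq]) (by fun_prop) (fun t => Real.abs_sin_le_one _)
    (fun t => ?_) (fun t => ?_) s
  · exact ((hasDerivAt_mul_sq_div_two lam t).cos.const_mul (-lam⁻¹)).congr_deriv
      (by field_simp)
  · rw [abs_mul, abs_neg, abs_inv]
    exact mul_le_of_le_one_right (by positivity) (Real.abs_cos_le_one _)

/-- The Cornu spiral `γ(s) = (∫₀ˢ cos(λt²/2) dt, ∫₀ˢ sin(λt²/2) dt)` of parameter
`λ ≠ 0` is a bounded curve of infinite length: its image is bounded, it is defined on
all of `ℝ`, and it is parametrized by arclength (`|γ'(s)| = 1`). -/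
theorem cornu_spiral_bounded_unit_speed
    (lam : ℝ) (hlam : lam ≠ 0)
    (x y : ℝ → ℝ)
    (hx : ∀ s, x s = ∫ t in (0:ℝ)..s, Real.cos (lam * t ^ 2 / 2))
    (hy : ∀ s, y s = ∫ t in (0:ℝ)..s, Real.sin (lam * t ^ 2 / 2)) :
    (∃ C : ℝ, ∀ s : ℝ, |x s| ≤ C ∧ |y s| ≤ C) ∧
    (∀ s : ℝ, HasDerivAt x (Real.cos (lam * s ^ 2 / 2)) s ∧
              HasDerivAt y (Real.sin (lam * s ^ 2 / 2)) s ∧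
              Real.sqrt ((deriv x s) ^ 2 + (deriv y s) ^ 2) = 1) := by
  obtain rfl : x = fun s => ∫ t in (0:ℝ)..s, Real.cos (lam * t ^ 2 / 2) := funext hx
  obtain rfl : y = fun s => ∫ t in (0:ℝ)..s, Real.sin (lam * t ^ 2 / 2) := funext hy
  refine ⟨⟨1 + 2 * |lam|⁻¹, fun s => ⟨abs_integral_cos_mul_sq_div_two_le hlam s,
    abs_integral_sin_mul_sq_div_two_le hlam s⟩⟩, fun s => ?_⟩
  have hdx := ((show Continuous fun t => Real.cos (lam * t ^ 2 / 2) by fun_prop)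
    |>.integral_hasStrictDerivAt 0 s).hasDerivAt
  have hdy := ((show Continuous fun t => Real.sin (lam * t ^ 2 / 2) by fun_prop)
    |>.integral_hasStrictDerivAt 0 s).hasDerivAt
  refine ⟨hdx, hdy, ?_⟩
  rw [hdx.deriv, hdy.deriv, Real.cos_sq_add_sin_sq, Real.sqrt_one]
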